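/- arXiv:0810.2313 — 6 statements merged into one kernel-verified Lean document; each statement's English description precedes it below -/
import Mathlib

section
/- For a tuple v = (v_1, ..., v_n) of nonnegative integers with n ≥ 1, the number lp(v) of nonnegative integer lattice points in the Pitman–Stanley polytope Π_n(v) satisfies lp(v) = sum over j from 0 to v_1 of lp((v_1 + v_2 - j, v_3, ..., v_n)), and lp of the empty tuple is 1. -/
/-!
Split a lattice point `x` of `Π_{n+1}(v)` into its first coordinate `j = x₀ ≤ v₀` and its tail.
Subtracting `j` from every prefix constraint of index `≥ 1` shows that the tail ranges exactly over
the lattice points of `Π_n(v₀ + v₁ - j, v₂, …, vₙ)`, so `Π_{n+1}(v)` is in bijection with the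
disjoint union of these smaller polytopes over `j ∈ {0, …, v₀}`.
-/

/-- `psCount v` is the number of nonnegative integer lattice points in the
Pitman–Stanley polytope `Π_n(v)`, i.e. the number of `x ∈ ℕ^n` such that
`x_1 + ... + x_k ≤ v_1 + ... + v_k` for all `1 ≤ k ≤ n`. -/
noncomputable def psCount {n : ℕ} (v : Fin n → ℕ) : ℕ :=
  Nat.card {x : Fin n → ℕ // ∀ k : Fin n, ∑ i ∈ Finset.Iic k, x i ≤ ∑ i ∈ Finset.Iic k, v i}

open Finset

namespace Fin

variable {M : Type*} [AddCommMonoid M] {n : ℕ}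

theorem sum_Iic_zero (f : Fin (n + 1) → M) : ∑ i ∈ Iic 0, f i = f 0 := by
  rw [← bot_eq_zero, Iic_bot, sum_singleton]

theorem sum_Iic_succ (f : Fin (n + 1) → M) (k : Fin n) :
    ∑ i ∈ Iic k.succ, f i = f 0 + ∑ i ∈ Iic k, f i.succ := by
  rw [Iic_eq_Icc, bot_eq_zero, Icc_eq_cons_Ioc (Fin.zero_le _), Finset.sum_cons,
    ← map_succEmb_Iic, sum_map]
  rfl

end Fin

variable {n : ℕ}

def psPoints (v : Fin n → ℕ) : Set (Fin n → ℕ) :=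
  {x | ∀ k, ∑ i ∈ Iic k, x i ≤ ∑ i ∈ Iic k, v i}

theorem psCount_eq_card (v : Fin n → ℕ) : psCount v = Nat.card (psPoints v) := rfl

theorem psPoints_finite (v : Fin n → ℕ) : (psPoints v).Finite := by
  refine (Set.finite_Iic fun _ => ∑ i, v i).subset fun x hx i => ?_
  calc x i ≤ ∑ j ∈ Iic i, x j := single_le_sum (fun _ _ => Nat.zero_le _) (mem_Iic.2 le_rfl)
    _ ≤ ∑ j ∈ Iic i, v j := hx i
    _ ≤ ∑ j, v j := sum_le_sum_of_subset (subset_univ _)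

theorem psCount_fin_zero (v : Fin 0 → ℕ) : psCount v = 1 :=
  Nat.card_eq_one_iff_exists.2
    ⟨⟨finZeroElim, finZeroElim⟩, fun _ => Subtype.ext (funext finZeroElim)⟩

/-- The paper's reduced tuple `(v_1 + v_2 - j, v_3, …, v_n)`, with indices shifted to start at 0. -/
def psReduce (v : Fin (n + 1) → ℕ) (j : ℕ) : Fin n → ℕ :=
  fun k => if (k : ℕ) = 0 then v 0 + v k.succ - j else v k.succ

theorem sum_Iic_psReduce (v : Fin (n + 1) → ℕ) {j : ℕ} (hj : j ≤ v 0) (k : Fin n) :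
    ∑ i ∈ Iic k, psReduce v j i = ∑ i ∈ Iic k.succ, v i - j := by
  obtain ⟨m, rfl⟩ := Nat.exists_eq_add_one_of_ne_zero k.pos.ne'
  have hsplit (i : Fin (m + 1)) :
      psReduce v j i = (if i = 0 then v 0 - j else 0) + v i.succ := by
    simp only [psReduce, Fin.val_eq_zero_iff]
    split_ifs <;> omega
  rw [sum_congr rfl fun i _ => hsplit i, sum_add_distrib, sum_ite_eq',
    if_pos (mem_Iic.2 (Fin.zero_le k)), Fin.sum_Iic_succ]
  omega

theorem mem_psPoints_succ_iff {v x : Fin (n + 1) → ℕ} :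
    x ∈ psPoints v ↔ x 0 ≤ v 0 ∧ Fin.tail x ∈ psPoints (psReduce v (x 0)) := by
  simp only [psPoints, Set.mem_ofPred_eq, Fin.forall_fin_succ, Fin.sum_Iic_zero]
  refine and_congr_right fun hx0 => forall_congr' fun k => ?_
  rw [sum_Iic_psReduce v hx0, Fin.sum_Iic_succ, Fin.sum_Iic_succ]
  simp only [Fin.tail]
  omega

def psPointsSuccEquiv (v : Fin (n + 1) → ℕ) :
    psPoints v ≃ Σ j : Fin (v 0 + 1), psPoints (psReduce v j) where
  toFun x :=
    ⟨⟨x.1 0, Nat.lt_succ_of_le (mem_psPoints_succ_iff.1 x.2).1⟩,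
      Fin.tail x.1, (mem_psPoints_succ_iff.1 x.2).2⟩
  invFun p :=
    ⟨Fin.cons p.1 p.2.1, mem_psPoints_succ_iff.2 ⟨Nat.le_of_lt_succ p.1.2, p.2.2⟩⟩
  left_inv x := Subtype.ext (Fin.cons_self_tail x.1)
  right_inv _ := rfl

theorem psCount_succ (v : Fin (n + 1) → ℕ) :
    psCount v = ∑ j ∈ range (v 0 + 1), psCount (psReduce v j) := by
  have (j : ℕ) : Finite (psPoints (psReduce v j)) := (psPoints_finite _).to_subtype
  rw [psCount_eq_card, Nat.card_congr (psPointsSuccEquiv v), Nat.card_sigma,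
    ← Fin.sum_univ_eq_sum_range]
  rfl

theorem stmt_7 :
    (∀ v : Fin 0 → ℕ, psCount v = 1) ∧
    ∀ (n : ℕ) (v : Fin (n + 1) → ℕ),
      psCount v = ∑ j ∈ Finset.range (v 0 + 1),
        psCount (fun k : Fin n => if (k : ℕ) = 0 then v 0 + v k.succ - j else v k.succ) :=
  ⟨psCount_fin_zero, fun _ => psCount_succ⟩
end

section
/- The number of integer points x = (x_1, ..., x_n) ∈ ℕ^n satisfying x_1 + ... + x_k ≤ k for all 1 ≤ k ≤ n equals the Catalan number C_{n+1}. -/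
/-!
Splitting off the first coordinate `a ≤ m` shows that the number `ballot n m` of sequences
`x : Fin n → ℕ` with `x 0 + ⋯ + x k ≤ k + m` for all `k` satisfies
`ballot (n + 1) m = ∑_{a ≤ m} ballot n (m - a + 1)`. By induction on `n` this gives
`ballot n 0 = C n` together with the convolution `ballot n (m + 1) = ∑_{i + j = n} C i * ballot j m`,
and the theorem is `ballot n 1 = ballot (n + 1) 0 = C (n + 1)`.
-/

open Finset

theorem Fin.sum_Iic_zero_s10 {M : Type*} [AddCommMonoid M] {n : ℕ} (f : Fin (n + 1) → M) :
    ∑ i ∈ Iic 0, f i = f 0 := by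
  simp [← filter_ge_eq_Iic, sum_filter]

theorem Fin.sum_Iic_succ_s10 {M : Type*} [AddCommMonoid M] {n : ℕ} (f : Fin (n + 1) → M)
    (k : Fin n) : ∑ i ∈ Iic k.succ, f i = f 0 + ∑ i ∈ Iic k, f i.succ := by
  simp only [← filter_ge_eq_Iic, sum_filter, Fin.sum_univ_succ, Fin.succ_le_succ_iff,
    Fin.zero_le, if_true]

/-- With `m = 1` and `k` counted from `0`, this is the paper's `x₁ + ⋯ + x_k ≤ k`. -/
def boundedSeqs (n m : ℕ) : Set (Fin n → ℕ) :=
  {x | ∀ k : Fin n, ∑ i ∈ Iic k, x i ≤ (k : ℕ) + m}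

lemma cons_mem_boundedSeqs_iff {n m a : ℕ} {y : Fin n → ℕ} :
    (Fin.cons a y : Fin (n + 1) → ℕ) ∈ boundedSeqs (n + 1) m ↔
      a ≤ m ∧ y ∈ boundedSeqs n (m - a + 1) := by
  simp only [boundedSeqs, Set.mem_ofPred_eq, Fin.forall_fin_succ, Fin.sum_Iic_zero_s10,
    Fin.sum_Iic_succ_s10, Fin.cons_zero, Fin.cons_succ, Fin.val_zero, Fin.val_succ, zero_add]
  refine and_congr_right fun ha => forall_congr' fun k => ?_
  omega

def consBoundedSeqs (n m : ℕ) :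
    (Σ a : Fin (m + 1), boundedSeqs n (m - a + 1)) → boundedSeqs (n + 1) m :=
  fun p => ⟨Fin.cons (p.1 : ℕ) p.2.1,
    cons_mem_boundedSeqs_iff.mpr ⟨Nat.lt_succ_iff.mp p.1.2, p.2.2⟩⟩

lemma consBoundedSeqs_bijective (n m : ℕ) : Function.Bijective (consBoundedSeqs n m) := by
  constructor
  · rintro ⟨a, y⟩ ⟨b, z⟩ h
    simp only [consBoundedSeqs, Subtype.mk.injEq, Fin.cons_inj] at h
    obtain ⟨hab, hyz⟩ := h
    obtain rfl : a = b := Fin.ext hab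
    obtain rfl : y = z := Subtype.ext hyz
    rfl
  · rintro ⟨x, hx⟩
    rw [← Fin.cons_self_tail x, cons_mem_boundedSeqs_iff] at hx
    exact ⟨⟨⟨x 0, Nat.lt_succ_of_le hx.1⟩, ⟨Fin.tail x, hx.2⟩⟩,
      Subtype.ext (Fin.cons_self_tail x)⟩

lemma finite_boundedSeqs (n m : ℕ) : (boundedSeqs n m).Finite := by
  induction n generalizing m with
  | zero => exact Set.toFinite _
  | succ n ih =>
    have := fun m => (ih m).to_subtype
    exact Set.finite_coe_iff.mp (Finite.of_surjective _ (consBoundedSeqs_bijective n m).2)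

def ballot : ℕ → ℕ → ℕ
  | 0, _ => 1
  | n + 1, m => ∑ t ∈ range (m + 1), ballot n (t + 1)

lemma ballot_zero_left (m : ℕ) : ballot 0 m = 1 := rfl

lemma ballot_succ_left (n m : ℕ) :
    ballot (n + 1) m = ∑ t ∈ range (m + 1), ballot n (t + 1) := rfl

lemma ballot_succ_zero (n : ℕ) : ballot (n + 1) 0 = ballot n 1 := by
  simp [ballot_succ_left]

lemma sum_range_ballot (n m : ℕ) :
    ∑ t ∈ range (m + 2), ballot n t = ballot n 0 + ballot (n + 1) m := by
  rw [sum_range_succ', add_comm, ballot_succ_left]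

lemma card_boundedSeqs (n m : ℕ) : Nat.card (boundedSeqs n m) = ballot n m := by
  induction n generalizing m with
  | zero => simp [boundedSeqs, ballot_zero_left]
  | succ n ih =>
    have := fun m => (finite_boundedSeqs n m).to_subtype
    rw [← Nat.card_eq_of_bijective _ (consBoundedSeqs_bijective n m), Nat.card_sigma,
      ballot_succ_left, ← sum_range_reflect]
    simp only [ih]
    exact Fin.sum_univ_eq_sum_range (fun a => ballot n (m - a + 1)) (m + 1)

/-- The boundary terms `catalan i * ballot j 0 = catalan i * catalan j` split off from the inner
sums reassemble into `catalan (n + 1)` by Segner's recurrence. -/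
lemma ballot_succ_succ {n : ℕ} (hcat : ∀ j ≤ n, ballot j 0 = catalan j)
    (hrec : ∀ m, ballot n (m + 1) = ∑ p ∈ antidiagonal n, catalan p.1 * ballot p.2 m) (m : ℕ) :
    ballot (n + 1) (m + 1) = ∑ p ∈ antidiagonal (n + 1), catalan p.1 * ballot p.2 m := by
  have hsplit : ∀ p ∈ antidiagonal n, ∑ t ∈ range (m + 2), catalan p.1 * ballot p.2 t =
      catalan p.1 * catalan p.2 + catalan p.1 * ballot (p.2 + 1) m := by
    intro p hp
    rw [← mul_sum, sum_range_ballot, hcat p.2 (HasAntidiagonal.antidiagonal.snd_le hp),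
      mul_add]
  calc ballot (n + 1) (m + 1)
      = ∑ t ∈ range (m + 2), ∑ p ∈ antidiagonal n, catalan p.1 * ballot p.2 t := by
        rw [ballot_succ_left]; exact sum_congr rfl fun t _ => hrec t
    _ = catalan (n + 1) + ∑ p ∈ antidiagonal n, catalan p.1 * ballot (p.2 + 1) m := by
        rw [sum_comm, sum_congr rfl hsplit, sum_add_distrib, catalan_succ']
    _ = ∑ p ∈ antidiagonal (n + 1), catalan p.1 * ballot p.2 m := by
        rw [Nat.sum_antidiagonal_succ', ballot_zero_left, mul_one]

lemma ballot_catalan_and_convolution (n : ℕ) : (∀ j ≤ n, ballot j 0 = catalan j) ∧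
    ∀ m, ballot n (m + 1) = ∑ p ∈ antidiagonal n, catalan p.1 * ballot p.2 m := by
  induction n with
  | zero =>
    exact ⟨fun j hj => by simp [Nat.le_zero.mp hj, ballot_zero_left],
      by simp [ballot_zero_left]⟩
  | succ n ih =>
    obtain ⟨hcat, hrec⟩ := ih
    have hnext : ballot (n + 1) 0 = catalan (n + 1) := by
      rw [ballot_succ_zero, hrec, catalan_succ']
      exact sum_congr rfl fun p hp => by
        rw [hcat p.2 (HasAntidiagonal.antidiagonal.snd_le hp)]
    refine ⟨fun j hj => ?_, ballot_succ_succ hcat hrec⟩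
    rcases Nat.le_succ_iff.mp hj with hj | rfl
    · exact hcat j hj
    · exact hnext

lemma ballot_one (n : ℕ) : ballot n 1 = catalan (n + 1) := by
  rw [← ballot_succ_zero]
  exact (ballot_catalan_and_convolution (n + 1)).1 _ le_rfl

theorem stmt_10 (n : ℕ) :
    Nat.card {x : Fin n → ℕ // ∀ k : Fin n, ∑ i ∈ Finset.Iic k, x i ≤ (k : ℕ) + 1}
      = catalan (n + 1) :=
  (card_boundedSeqs n 1).trans (ballot_one n)
end

section
/- Fix a tuple y = (y_1, ..., y_{n-1}) of nonnegative integers (n ≥ 1). Define the children of y to be the tuples (y_1, ..., y_{n-1}, 0) together with (y_1, ..., y_{n-2}, y_{n-1} - i, i+1) for 0 ≤ i ≤ y_{n-1}. Then a tuple x ∈ ℕ^n satisfies x_1 + ... + x_k ≤ k for all 1 ≤ k ≤ n if and only if x is a child of some y ∈ ℕ^{n-1} with y_1 + ... + y_k ≤ k for all 1 ≤ k ≤ n-1, and each x is a child of exactly one such y. -/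
/-!
`IsChild y x` holds exactly for `y = parent x`, which gives uniqueness. The constraints on `x`
and on its parent differ only in the last two partial sums, and when `x_n ≥ 1` the constraint
on `x₁ + ⋯ + x_{n-1}` is implied by the one on the full sum.
-/

/-- `x ∈ ℕ^{n}` (with `n = m + 2`) is a *child* of `y ∈ ℕ^{n-1}` if either
`x = (y_1, ..., y_{n-1}, 0)`, or `x = (y_1, ..., y_{n-2}, y_{n-1} - i, i + 1)`
for some `0 ≤ i ≤ y_{n-1}`. -/
def IsChild {m : ℕ} (y : Fin (m + 1) → ℕ) (x : Fin (m + 2) → ℕ) : Prop :=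
  x = Fin.snoc y 0 ∨
    ∃ i ≤ y (Fin.last m),
      x = Fin.snoc (Function.update y (Fin.last m) (y (Fin.last m) - i)) (i + 1)

open Finset

def IsPitmanStanleyPoint {n : ℕ} (x : Fin n → ℕ) : Prop :=
  ∀ k : Fin n, ∑ i ∈ Iic k, x i ≤ (k : ℕ) + 1

theorem isPitmanStanleyPoint_succ_iff {n : ℕ} (x : Fin (n + 1) → ℕ) :
    IsPitmanStanleyPoint x ↔ IsPitmanStanleyPoint (Fin.init x) ∧ ∑ i, x i ≤ n + 1 := by
  rw [IsPitmanStanleyPoint, Fin.forall_fin_succ', ← Fin.top_eq_last, Iic_top]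
  simp only [Fin.sum_Iic_castSucc, Fin.val_castSucc, Fin.val_top]
  rfl

def parent {m : ℕ} (x : Fin (m + 2) → ℕ) : Fin (m + 1) → ℕ :=
  match x (Fin.last _) with
  | 0 => Fin.init x
  | i + 1 => Function.update (Fin.init x) (Fin.last m) (x (Fin.last m).castSucc + i)

section parent

variable {m : ℕ}

theorem parent_of_last_eq_zero {x : Fin (m + 2) → ℕ} (h : x (Fin.last _) = 0) :
    parent x = Fin.init x := by
  simp only [parent, h]

theorem parent_of_last_eq_succ {x : Fin (m + 2) → ℕ} {i : ℕ} (h : x (Fin.last _) = i + 1) :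
    parent x = Function.update (Fin.init x) (Fin.last m) (x (Fin.last m).castSucc + i) := by
  simp only [parent, h]

theorem isChild_parent (x : Fin (m + 2) → ℕ) : IsChild (parent x) x := by
  rcases h : x (Fin.last _) with _ | i
  · left
    rw [parent_of_last_eq_zero h, ← h, Fin.snoc_init_self]
  · right
    refine ⟨i, ?_, ?_⟩ <;>
      rw [parent_of_last_eq_succ h, Function.update_self]
    · exact Nat.le_add_left i _
    · rw [Function.update_idem, Nat.add_sub_cancel,
        show x (Fin.last m).castSucc = Fin.init x (Fin.last m) from rfl, Function.update_eq_self,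
        ← h, Fin.snoc_init_self]

theorem IsChild.eq_parent {x : Fin (m + 2) → ℕ} {y : Fin (m + 1) → ℕ} (h : IsChild y x) :
    y = parent x := by
  rcases h with rfl | ⟨i, hi, rfl⟩
  · rw [parent_of_last_eq_zero (Fin.snoc_last _ _), Fin.init_snoc]
  · rw [parent_of_last_eq_succ (Fin.snoc_last _ _), Fin.init_snoc, Fin.snoc_castSucc,
      Function.update_self, Nat.sub_add_cancel hi, Function.update_idem, Function.update_eq_self]

theorem init_parent (x : Fin (m + 2) → ℕ) : Fin.init (parent x) = Fin.init (Fin.init x) := by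
  rcases h : x (Fin.last _) with _ | i
  · rw [parent_of_last_eq_zero h]
  · rw [parent_of_last_eq_succ h, Fin.init_update_last]

theorem isPitmanStanleyPoint_parent_iff (x : Fin (m + 2) → ℕ) :
    IsPitmanStanleyPoint (parent x) ↔ IsPitmanStanleyPoint x := by
  have sum_init_add_last {n : ℕ} (y : Fin (n + 1) → ℕ) :
      ∑ i, y i = ∑ i, Fin.init y i + y (Fin.last n) :=
    Fin.sum_univ_castSucc y
  rw [isPitmanStanleyPoint_succ_iff, isPitmanStanleyPoint_succ_iff x,
    isPitmanStanleyPoint_succ_iff (Fin.init x), init_parent, sum_init_add_last (parent x),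
    sum_init_add_last x, sum_init_add_last (Fin.init x), init_parent]
  rcases h : x (Fin.last _) with _ | i
  · rw [parent_of_last_eq_zero h]
    simp only [Fin.init, and_assoc]
    exact and_congr_right fun _ => by omega
  · rw [parent_of_last_eq_succ h, Function.update_self]
    simp only [Fin.init, and_assoc]
    exact and_congr_right fun _ => by omega

end parent

/-- A tuple `x ∈ ℕ^{m+2}` is a lattice point of `Π_{m+2}((1,...,1))` iff it is a child
of some lattice point `y` of `Π_{m+1}((1,...,1))`, and moreover `x` is a child of at
most one such `y`. -/
theorem stmt_16 (m : ℕ) (x : Fin (m + 2) → ℕ) :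
    ((∀ k : Fin (m + 2), ∑ i ∈ Finset.Iic k, x i ≤ (k : ℕ) + 1) ↔
      ∃ y : Fin (m + 1) → ℕ,
        (∀ k : Fin (m + 1), ∑ i ∈ Finset.Iic k, y i ≤ (k : ℕ) + 1) ∧ IsChild y x) ∧
    ∀ y₁ y₂ : Fin (m + 1) → ℕ,
      (∀ k : Fin (m + 1), ∑ i ∈ Finset.Iic k, y₁ i ≤ (k : ℕ) + 1) →
      (∀ k : Fin (m + 1), ∑ i ∈ Finset.Iic k, y₂ i ≤ (k : ℕ) + 1) →
      IsChild y₁ x → IsChild y₂ x → y₁ = y₂ := by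
  refine ⟨⟨fun hx => ?_, ?_⟩, ?_⟩
  · exact ⟨parent x, (isPitmanStanleyPoint_parent_iff x).2 hx, isChild_parent x⟩
  · rintro ⟨y, hy, hchild⟩
    rw [hchild.eq_parent] at hy
    exact (isPitmanStanleyPoint_parent_iff x).1 hy
  · intro y₁ y₂ _ _ h₁ h₂
    rw [h₁.eq_parent, h₂.eq_parent]
end

section
/- For nonnegative integers v_1, v_2 and a nonnegative integer c: binomial(v_2+c-1, c)*binomial(v_1-1, 0) + sum over i from 0 to c of binomial(v_2+(c-i)-1, c-i)*binomial(v_1+i, i+1) equals sum over j from 0 to v_1 of binomial(v_1+v_2-j+c-1, c). -/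
/-!
Induct on `v₁`. Pascal's rule `C(v₁+1+i, i+1) = C(v₁+i, i) + C(v₁+i, i+1)` splits the sum on the
left into the previous one and `∑ i, C(v₂+(c-i)-1, c-i) · C(v₁+i, i)`, which is the Vandermonde
identity for multisets, `∑_{i+j=c} multichoose (v₁+1) i · multichoose v₂ j = C(v₁+v₂+c, c)`;
on the right, the same term is the new summand `j = 0`. The multiset Vandermonde identity is
Chu–Vandermonde at negative integers, since `C(-a, j) = (-1)^j · multichoose a j`.
-/

open Finset

theorem Nat.add_multichoose_eq (m n k : ℕ) :
    (m + n).multichoose k = ∑ p ∈ antidiagonal k, m.multichoose p.1 * n.multichoose p.2 := by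
  have choose_neg_natCast (a j : ℕ) :
      Ring.choose (-(a : ℤ)) j = Int.negOnePow j • (a.multichoose j : ℤ) := by
    rw [Ring.choose_neg', Nat.multichoose_eq]
    rfl -- `Ring.multichoose` on `ℤ` is defined through `Nat.choose` at natural numbers
  have h := Ring.add_choose_eq k (Commute.all (-(m : ℤ)) (-(n : ℤ)))
  rw [← neg_add, ← Nat.cast_add] at h
  simp only [choose_neg_natCast, smul_mul_smul_comm] at h
  rw [sum_congr rfl fun p hp => by rw [← Int.negOnePow_add, ← Nat.cast_add, mem_antidiagonal.mp hp],
    ← smul_sum] at h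
  exact_mod_cast smul_left_cancel _ h

-- `Nat.multichoose_eq` absorbs the truncated `b + (c - i) - 1`, also when `b = 0`.
theorem sum_range_choose_mul_choose (a b c : ℕ) :
    ∑ i ∈ range (c + 1), (b + (c - i) - 1).choose (c - i) * (a + i).choose i
      = (a + b + c).choose c := by
  have h := Nat.add_multichoose_eq (a + 1) b c
  rw [Nat.sum_antidiagonal_eq_sum_range_succ (fun i j => (a + 1).multichoose i * b.multichoose j)]
    at h
  simp only [Nat.multichoose_eq, Nat.add_right_comm a 1, Nat.add_sub_cancel] at h
  rw [show a + b + c = a + b + 1 + c - 1 by omega, h]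
  exact sum_congr rfl fun i _ => mul_comm _ _

theorem stmt_17 (v₁ v₂ c : ℕ) :
    (v₂ + c - 1).choose c * (v₁ - 1).choose 0 +
        ∑ i ∈ Finset.range (c + 1), (v₂ + (c - i) - 1).choose (c - i) * (v₁ + i).choose (i + 1)
      = ∑ j ∈ Finset.range (v₁ + 1), (v₁ + v₂ - j + c - 1).choose c := by
  induction v₁ with
  | zero => simp [Nat.choose_succ_self]
  | succ v ih =>
    have pascal (i : ℕ) : (v + 1 + i).choose (i + 1) = (v + i).choose i + (v + i).choose (i + 1) := by
      rw [Nat.add_right_comm, Nat.choose_succ_succ']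
    have shift (j : ℕ) : v + 1 + v₂ - (j + 1) = v + v₂ - j := by omega
    simp only [pascal, mul_add, sum_add_distrib, sum_range_choose_mul_choose]
    simp only [Nat.choose_zero_right, mul_one] at ih ⊢
    rw [sum_range_succ' _ (v + 1)]
    simp only [shift, ← ih, show v + 1 + v₂ - 0 + c - 1 = v + v₂ + c by omega]
    ring
end

section
/- For every n ≥ 0, let a_n denote the number of integer points x ∈ ℕ^n with x_1 + ... + x_k ≤ k for all 1 ≤ k ≤ n; then a_0 = 1 and a_n = C_{n+1}, where C denotes the Catalan numbers, so a_n = sum_{i=1}^{n+1} C_{i-1} C_{n+1-i}. -/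
open Finset

/-- `psCatalanCount n` is the number of lattice points of the Pitman–Stanley polytope
`Π_n((1,...,1))`: the `x ∈ ℕ^n` with `x_1 + ... + x_k ≤ k` for all `1 ≤ k ≤ n`. -/
noncomputable def psCatalanCount (n : ℕ) : ℕ :=
  Nat.card {x : Fin n → ℕ // ∀ k : Fin n, ∑ i ∈ Finset.Iic k, x i ≤ (k : ℕ) + 1}

namespace PSAux

/-- generalized count -/
noncomputable def F (n c : ℕ) : ℕ :=
  Nat.card {x : Fin n → ℕ // ∀ k : Fin n, ∑ i ∈ Finset.Iic k, x i ≤ (k : ℕ) + c}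

/-- recursive ballot numbers -/
def g : ℕ → ℕ → ℕ
  | 0, _ => 1
  | n + 1, c => ∑ j ∈ Finset.range (c + 1), g n (c + 1 - j)

lemma Iic_zero (n : ℕ) : Finset.Iic (0 : Fin (n + 1)) = {0} := by
  ext i
  simp [Fin.le_zero_iff]

lemma Iic_succ (n : ℕ) (k : Fin n) :
    Finset.Iic (Fin.succ k) = insert 0 ((Finset.Iic k).map (Fin.succEmb n)) := by
  ext i
  simp only [Finset.mem_Iic, Finset.mem_insert, Finset.mem_map]
  constructor
  · intro h
    rcases Fin.eq_zero_or_eq_succ i with h0 | ⟨j, rfl⟩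
    · exact Or.inl h0
    · exact Or.inr ⟨j, by simpa [Fin.succ_le_succ_iff] using h, rfl⟩
  · rintro (rfl | ⟨j, hj, rfl⟩)
    · exact Fin.zero_le _
    · exact Fin.succ_le_succ_iff.mpr hj

lemma sum_Iic_succ (n : ℕ) (x : Fin (n + 1) → ℕ) (k : Fin n) :
    ∑ i ∈ Finset.Iic (Fin.succ k), x i = x 0 + ∑ i ∈ Finset.Iic k, Fin.tail x i := by
  rw [Iic_succ, Finset.sum_insert (by simp [Fin.succ_ne_zero]), Finset.sum_map]
  rfl

instance finiteF (n c : ℕ) :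
    Finite {x : Fin n → ℕ // ∀ k : Fin n, ∑ i ∈ Finset.Iic k, x i ≤ (k : ℕ) + c} := by
  apply Finite.of_injective
    (fun x => (fun i => (⟨x.1 i, by
      have h1 : x.1 i ≤ ∑ j ∈ Finset.Iic i, x.1 j :=
        Finset.single_le_sum (fun j _ => Nat.zero_le _) (Finset.mem_Iic.2 le_rfl)
      have h2 := x.2 i
      have h3 : (i : ℕ) < n := i.2
      omega⟩ : Fin (n + c)) : Fin n → Fin (n + c)))
  intro x y h
  apply Subtype.ext
  funext i
  exact congrArg Fin.val (congrFun h i)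

/-- the structural equivalence splitting off the first coordinate -/
noncomputable def splitEquiv (n c : ℕ) :
    {x : Fin (n + 1) → ℕ // ∀ k : Fin (n + 1), ∑ i ∈ Finset.Iic k, x i ≤ (k : ℕ) + c} ≃
      Σ j : Fin (c + 1),
        {y : Fin n → ℕ // ∀ k : Fin n, ∑ i ∈ Finset.Iic k, y i ≤ (k : ℕ) + (c + 1 - (j : ℕ))} where
  toFun x := ⟨⟨x.1 0, by
      have h := x.2 0
      rw [Iic_zero, Finset.sum_singleton] at h
      simp only [Fin.val_zero, zero_add] at h
      omega⟩,
    ⟨Fin.tail x.1, by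
      intro k
      show ∑ i ∈ Finset.Iic k, Fin.tail x.1 i ≤ (k : ℕ) + (c + 1 - x.1 0)
      have h := x.2 (Fin.succ k)
      rw [sum_Iic_succ] at h
      have h0 := x.2 0
      rw [Iic_zero, Finset.sum_singleton] at h0
      simp only [Fin.val_zero, zero_add] at h0
      simp only [Fin.val_succ] at h
      omega⟩⟩
  invFun p := ⟨Fin.cons (p.1 : ℕ) p.2.1, by
      intro k
      have hj : (p.1 : ℕ) ≤ c := by have := p.1.2; omega
      induction k using Fin.cases with
      | zero =>
        rw [Iic_zero, Finset.sum_singleton]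
        simpa using hj
      | succ k =>
        rw [sum_Iic_succ]
        simp only [Fin.cons_zero, Fin.tail_cons, Fin.val_succ]
        have h := p.2.2 k
        omega⟩
  left_inv x := Subtype.ext (Fin.cons_self_tail x.1)
  right_inv p := rfl

lemma card_sigma' {ι : Type*} [Fintype ι] (A : ι → Type*) [∀ i, Finite (A i)] :
    Nat.card (Σ i, A i) = ∑ i, Nat.card (A i) := by
  classical
  letI : ∀ i, Fintype (A i) := fun i => Fintype.ofFinite _
  simp [Nat.card_eq_fintype_card, Fintype.card_sigma]

lemma F_succ (n c : ℕ) : F (n + 1) c = ∑ j ∈ Finset.range (c + 1), F n (c + 1 - j) := by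
  classical
  rw [F, Nat.card_congr (splitEquiv n c), card_sigma']
  exact Fin.sum_univ_eq_sum_range (fun j => F n (c + 1 - j)) (c + 1)

lemma F_zero (c : ℕ) : F 0 c = 1 := by
  haveI : Unique {x : Fin 0 → ℕ // ∀ k : Fin 0, ∑ i ∈ Finset.Iic k, x i ≤ (k : ℕ) + c} :=
    { default := ⟨finZeroElim, fun k => k.elim0⟩
      uniq := fun a => Subtype.ext (funext fun i => i.elim0) }
  exact Nat.card_unique

lemma g_zero_def (c : ℕ) : g 0 c = 1 := rfl

lemma g_succ_def (n c : ℕ) : g (n + 1) c = ∑ j ∈ Finset.range (c + 1), g n (c + 1 - j) := rfl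

lemma F_eq_g (n c : ℕ) : F n c = g n c := by
  induction n generalizing c with
  | zero => rw [F_zero, g_zero_def]
  | succ n ih =>
    rw [F_succ, g_succ_def]
    exact Finset.sum_congr rfl fun j _ => ih _

/-- star recurrence -/
lemma g_succ_succ (n c : ℕ) : g (n + 1) (c + 1) = g (n + 1) c + g n (c + 2) := by
  rw [g_succ_def, g_succ_def, Finset.sum_range_succ' (fun j => g n (c + 1 + 1 - j))]
  have h : ∀ j ∈ Finset.range (c + 1), g n (c + 1 + 1 - (j + 1)) = g n (c + 1 - j) := by
    intro j hj
    congr 1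
    omega
  rw [Finset.sum_congr rfl h, Nat.sub_zero]

/-- triangle reindexing -/
lemma triangle (G : ℕ → ℕ → ℕ) (n : ℕ) :
    ∑ i ∈ Finset.range (n + 1), ∑ k ∈ Finset.range (n + 1 - i), G i k =
      ∑ j ∈ Finset.range (n + 1), ∑ i ∈ Finset.range (j + 1), G i (j - i) := by
  induction n with
  | zero => simp
  | succ n ih =>
    have h1 : ∀ i ∈ Finset.range (n + 2), ∑ k ∈ Finset.range (n + 2 - i), G i k =
        ∑ k ∈ Finset.range (n + 1 - i), G i k + if i ≤ n + 1 then G i (n + 1 - i) else 0 := by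
      intro i hi
      rw [Finset.mem_range] at hi
      have hle : i ≤ n + 1 := by omega
      rw [if_pos hle]
      have : n + 2 - i = (n + 1 - i) + 1 := by omega
      rw [this, Finset.sum_range_succ]
    rw [Finset.sum_congr rfl h1, Finset.sum_add_distrib]
    have h2 : ∑ i ∈ Finset.range (n + 2), ∑ k ∈ Finset.range (n + 1 - i), G i k =
        ∑ i ∈ Finset.range (n + 1), ∑ k ∈ Finset.range (n + 1 - i), G i k := by
      rw [Finset.sum_range_succ]
      simp
    have h3 : ∑ i ∈ Finset.range (n + 2), (if i ≤ n + 1 then G i (n + 1 - i) else 0) =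
        ∑ i ∈ Finset.range (n + 2), G i (n + 1 - i) := by
      refine Finset.sum_congr rfl fun i hi => ?_
      rw [Finset.mem_range] at hi
      rw [if_pos (by omega)]
    rw [h2, h3, ih]
    conv_rhs => rw [Finset.sum_range_succ]

/-- key convolution identity -/
lemma g_conv : ∀ n c : ℕ, g n (c + 1) = ∑ i ∈ Finset.range (n + 1), catalan i * g (n - i) c := by
  intro n
  induction n using Nat.strong_induction_on with
  | _ n ih =>
    intro c
    match n with
    | 0 => simp [g_zero_def]
    | n + 1 =>
      rw [g_succ_succ]
      have hA : g n (c + 2) = ∑ i ∈ Finset.range (n + 1), catalan i * g (n - i) (c + 1) :=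
        ih n (by omega) (c + 1)
      have hB : ∀ i ∈ Finset.range (n + 1),
          catalan i * g (n - i) (c + 1) =
            ∑ k ∈ Finset.range (n + 1 - i), catalan i * (catalan k * g (n - i - k) c) := by
        intro i hi
        rw [Finset.mem_range] at hi
        rw [ih (n - i) (by omega) c]
        rw [Finset.mul_sum]
        have : n - i + 1 = n + 1 - i := by omega
        rw [this]
      have hA2 : g n (c + 2) = ∑ i ∈ Finset.range (n + 1),
          ∑ k ∈ Finset.range (n + 1 - i), catalan i * (catalan k * g (n - i - k) c) := by
        rw [hA]; exact Finset.sum_congr rfl hB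
      rw [triangle (fun i k => catalan i * (catalan k * g (n - i - k) c)) n] at hA2
      have hC : ∀ j ∈ Finset.range (n + 1),
          (∑ i ∈ Finset.range (j + 1), catalan i * (catalan (j - i) * g (n - i - (j - i)) c)) =
            catalan (j + 1) * g (n - j) c := by
        intro j hj
        rw [Finset.mem_range] at hj
        have h1 : ∀ i ∈ Finset.range (j + 1),
            catalan i * (catalan (j - i) * g (n - i - (j - i)) c) =
              (catalan i * catalan (j - i)) * g (n - j) c := by
          intro i hi
          rw [Finset.mem_range] at hi
          have : n - i - (j - i) = n - j := by omega
          rw [this, mul_assoc]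
        rw [Finset.sum_congr rfl h1, ← Finset.sum_mul]
        congr 1
        rw [catalan_succ j, Fin.sum_univ_eq_sum_range (fun i => catalan i * catalan (j - i))]
      rw [Finset.sum_congr rfl hC] at hA2
      rw [hA2]
      rw [Finset.sum_range_succ' (fun i => catalan i * g (n + 1 - i) c)]
      simp only [Nat.succ_sub_succ, catalan_zero, one_mul, Nat.sub_zero]
      omega

lemma g_zero (n : ℕ) : g n 0 = catalan n := by
  induction n using Nat.strong_induction_on with
  | _ n ih =>
    match n with
    | 0 => simp [g_zero_def, catalan_zero]
    | n + 1 =>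
      have h1 : g (n + 1) 0 = g n 1 := by
        rw [g_succ_def]
        simp
      rw [h1, show (1 : ℕ) = 0 + 1 from rfl, g_conv n 0]
      rw [catalan_succ n, Fin.sum_univ_eq_sum_range (fun i => catalan i * catalan (n - i))]
      exact Finset.sum_congr rfl fun i hi => by
        rw [Finset.mem_range] at hi
        rw [ih (n - i) (by omega)]

lemma g_one (n : ℕ) : g n 1 = catalan (n + 1) := by
  have h1 : g (n + 1) 0 = g n 1 := by
    rw [g_succ_def]; simp
  rw [← h1, g_zero]

lemma ps_eq (n : ℕ) : psCatalanCount n = catalan (n + 1) := by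
  have : psCatalanCount n = F n 1 := rfl
  rw [this, F_eq_g, g_one]

end PSAux

theorem stmt_18 :
    psCatalanCount 0 = 1 ∧
    ∀ n : ℕ,
      psCatalanCount n = catalan (n + 1) ∧
      psCatalanCount n =
        ∑ i ∈ Finset.Icc 1 (n + 1), catalan (i - 1) * catalan (n + 1 - i) := by
  constructor
  · rw [PSAux.ps_eq 0]
    exact catalan_one
  · intro n
    refine ⟨PSAux.ps_eq n, ?_⟩
    rw [PSAux.ps_eq n, catalan_succ n,
      Fin.sum_univ_eq_sum_range (fun i => catalan i * catalan (n - i))]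
    refine Finset.sum_nbij' (fun i => i + 1) (fun i => i - 1) ?_ ?_ ?_ ?_ ?_
    · intro i hi; simp only [Finset.mem_range] at hi; simp only [Finset.mem_Icc]; omega
    · intro i hi; simp only [Finset.mem_Icc] at hi; simp only [Finset.mem_range]; omega
    · intro i hi; simp only [Nat.add_sub_cancel]
    · intro i hi; simp only [Finset.mem_Icc] at hi; omega
    · intro i hi
      simp only [Finset.mem_range] at hi
      have h1 : i + 1 - 1 = i := by omega
      have h2 : n + 1 - (i + 1) = n - i := by omega
      rw [h1, h2]
end

section
/- Let p = (p_1, ..., p_n) be a nondecreasing tuple of nonnegative integers and define LP(p) as the number of nondecreasing tuples q ∈ ℕ^n with q ≤ p componentwise. Then for each 0 ≤ j ≤ n: sum over i from 1 to j+1 of (-1)^{j-i+1} * binomial(p_i + 1, j - i + 1) * LP((p_1, ..., p_{i-1})) equals 1 if j = 0 and 0 if j ≥ 1, where LP of the empty tuple is 1. -/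
/-- `prefLP n p k` is `LP((p_1, ..., p_k))`: the number of nondecreasing tuples
`q ∈ ℕ^k` with `q_i ≤ p_i` for each `i ≤ k`.  (For `k ≤ n`, the constraint
`∀ h : (i : ℕ) < n, ...` always applies, so this is exactly the number of
nondecreasing tuples bounded by the length-`k` prefix of `p`; in particular
`prefLP n p 0 = 1`.) -/
noncomputable def prefLP (n : ℕ) (p : Fin n → ℕ) (k : ℕ) : ℕ :=
  Nat.card {q : Fin k → ℕ //
    Monotone q ∧ ∀ i : Fin k, ∀ h : (i : ℕ) < n, q i ≤ p ⟨i, h⟩}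

/-!
Index the sum by `s = i - 1 ∈ [0, j]`. Since `p` is nondecreasing,
`C(p_s + 1, j - s) · LP(p_0, …, p_{s-1})` counts the tuples `u ≤ p` of length `j` that weakly
increase on `[0, s)` and strictly decrease on `[s, j)`: a nondecreasing prefix followed by a
strictly decreasing tail, i.e. a `(j - s)`-subset of `[0, p_s]`. For `j > 0` such a tuple has its
maximum at `s - 1` or at `s`, and the tuples with maximum at `s` are exactly those having both
shapes `s` and `s + 1`. So the number of tuples of shape `s` is the number of peaks at `s - 1`
plus the number at `s`, and the alternating sum telescopes to the number of peaks at `j`, i.e. `0`.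
-/

open Finset

section RiseFall

variable {α : Type*} [LinearOrder α] {j : ℕ}

def RiseFall (s : ℕ) (u : Fin j → α) : Prop :=
  MonotoneOn u {m | (m : ℕ) < s} ∧ StrictAntiOn u {m | s ≤ (m : ℕ)}

def PeakAt (s : ℕ) (u : Fin j → α) : Prop :=
  s < j ∧ RiseFall s u ∧ RiseFall (s + 1) u

lemma riseFall_zero_iff_peakAt_zero (hj : 0 < j) {u : Fin j → α} :
    RiseFall 0 u ↔ PeakAt 0 u := by
  refine ⟨fun h => ⟨hj, h, ?_, fun a _ b _ hab => h.2 (Nat.zero_le _) (Nat.zero_le _) hab⟩,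
    fun h => h.2.1⟩
  intro a ha b hb _
  simp only [Set.mem_ofPred_eq] at ha hb
  rw [Fin.ext (show (a : ℕ) = b by omega)]

lemma not_peakAt_and_peakAt_succ {s : ℕ} {u : Fin j → α} :
    ¬ (PeakAt s u ∧ PeakAt (s + 1) u) := by
  rintro ⟨⟨-, ⟨-, hfall⟩, -⟩, ⟨hs, -, ⟨hrise, -⟩⟩⟩
  have hdrop := hfall (a := ⟨s, by omega⟩) (b := ⟨s + 1, hs⟩) (by simp) (by simp) (by simp)
  have hclimb := hrise (a := ⟨s, by omega⟩) (b := ⟨s + 1, hs⟩) (by simp) (by simp) (by simp)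
  exact hdrop.not_ge hclimb

lemma riseFall_succ_iff {s : ℕ} (hs : s < j) {u : Fin j → α} :
    RiseFall (s + 1) u ↔ PeakAt s u ∨ PeakAt (s + 1) u := by
  refine ⟨fun h => ?_, fun h => h.elim (fun h => h.2.2) (fun h => h.2.1)⟩
  obtain ⟨hrise, hfall⟩ := h
  by_cases hclimb : ∃ hs' : s + 1 < j, u ⟨s, hs⟩ ≤ u ⟨s + 1, hs'⟩
  · obtain ⟨hs', hclimb⟩ := hclimb
    refine Or.inr ⟨hs', ⟨hrise, hfall⟩, fun a ha b hb hab => ?_,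
      fun a ha b hb hab => hfall (by simp at ha ⊢; omega) (by simp at hb ⊢; omega) hab⟩
    simp only [Set.mem_ofPred_eq] at ha hb
    have hab' := Fin.le_def.1 hab
    obtain hb | rfl : (b : ℕ) < s + 1 ∨ b = ⟨s + 1, hs'⟩ := by
      simp only [Fin.ext_iff]; omega
    · exact hrise (by simp; omega) hb hab
    obtain ha | rfl : (a : ℕ) < s + 1 ∨ a = ⟨s + 1, hs'⟩ := by
      simp only [Fin.ext_iff]; omega
    · exact (hrise ha (by simp) (Fin.mk_le_mk.2 (by simp at hab'; omega))).trans hclimb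
    · exact le_rfl
  · refine Or.inl ⟨hs, ⟨fun a ha b hb hab => hrise (by simp at ha ⊢; omega)
      (by simp at hb ⊢; omega) hab, fun a ha b hb hab => ?_⟩, hrise, hfall⟩
    simp only [Set.mem_ofPred_eq] at ha hb
    have hab' := Fin.lt_def.1 hab
    obtain ha | rfl : s + 1 ≤ (a : ℕ) ∨ a = ⟨s, hs⟩ := by simp only [Fin.ext_iff]; omega
    · exact hfall ha (by simp; omega) hab
    simp only at hab'
    have hs' : s + 1 < j := by omega
    have hdrop : u ⟨s + 1, hs'⟩ < u ⟨s, hs⟩ := lt_of_not_ge fun h => hclimb ⟨hs', h⟩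
    exact lt_of_le_of_lt (hfall.antitoneOn (by simp) (by simp; omega) (Fin.mk_le_mk.2 hab'))
      hdrop

open Classical in
lemma card_filter_riseFall_succ (B : Finset (Fin j → α)) {s : ℕ} (hs : s < j) :
    #(B.filter (RiseFall (s + 1))) = #(B.filter (PeakAt s)) + #(B.filter (PeakAt (s + 1))) := by
  rw [← card_union_of_disjoint
    (disjoint_filter.2 fun u _ h h' => not_peakAt_and_peakAt_succ ⟨h, h'⟩), ← filter_or]
  exact congrArg card (filter_congr fun u _ => riseFall_succ_iff hs)

lemma sum_range_neg_one_pow_mul_eq_of_eq_add {f e : ℕ → ℤ} {k : ℕ} (h0 : f 0 = e 0)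
    (hsucc : ∀ s < k, f (s + 1) = e s + e (s + 1)) :
    ∑ s ∈ range (k + 1), (-1) ^ (k - s) * f s = e k := by
  induction k with
  | zero => simp [h0]
  | succ k ih =>
    have hflip : ∀ s ∈ range (k + 1),
        (-1 : ℤ) ^ (k + 1 - s) * f s = -((-1) ^ (k - s) * f s) := by
      intro s hs
      rw [Nat.sub_add_comm (mem_range_succ_iff.1 hs), pow_succ]
      ring
    rw [sum_range_succ, sum_congr rfl hflip, sum_neg_distrib,
      ih fun s hs => hsucc s (hs.trans k.lt_succ_self), hsucc k k.lt_succ_self]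
    simp

open Classical in
lemma sum_range_neg_one_pow_mul_card_filter_riseFall (B : Finset (Fin j → α)) (hj : 0 < j) :
    ∑ s ∈ range (j + 1), (-1) ^ (j - s) * (#(B.filter (RiseFall s)) : ℤ) = 0 := by
  have hempty : B.filter (PeakAt j) = ∅ := filter_false_of_mem fun u _ h => h.1.false
  rw [sum_range_neg_one_pow_mul_eq_of_eq_add (e := fun s => #(B.filter (PeakAt s)))]
  · simp [hempty]
  · exact congrArg _ (congrArg card (filter_congr fun u _ => riseFall_zero_iff_peakAt_zero hj))
  · intro s hs
    rw [card_filter_riseFall_succ B hs, Nat.cast_add]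

lemma riseFall_self_iff {u : Fin j → α} : RiseFall j u ↔ Monotone u :=
  ⟨fun h a b hab => h.1 a.2 b.2 hab,
    fun h => ⟨h.monotoneOn _, fun a ha => absurd a.2 (not_lt.2 ha)⟩⟩

lemma riseFall_iff_castAdd_natAdd {s t : ℕ} {u : Fin (s + t) → α} :
    RiseFall s u ↔
      Monotone (fun i => u (Fin.castAdd t i)) ∧ StrictAnti (fun i => u (Fin.natAdd s i)) := by
  refine and_congr ⟨fun h a b hab => h (by simp) (by simp) hab, fun h a ha b hb hab => ?_⟩
    ⟨fun h a b hab => h (by simp) (by simp) (by simpa using hab), fun h a ha b hb hab => ?_⟩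
  · simpa using h (a := ⟨a, ha⟩) (b := ⟨b, hb⟩) hab
  · simp only [Set.mem_ofPred_eq] at ha hb
    have key := h (a := ⟨a - s, by omega⟩) (b := ⟨b - s, by omega⟩)
      (Fin.mk_lt_mk.2 (by have := Fin.lt_def.1 hab; omega))
    dsimp only at key
    rwa [show Fin.natAdd s ⟨a - s, _⟩ = a from Fin.ext (by simp; omega),
      show Fin.natAdd s ⟨b - s, _⟩ = b from Fin.ext (by simp; omega)] at key

end RiseFall

lemma natCard_strictAnti_le_eq_choose (b t : ℕ) :
    Nat.card {v : Fin t → ℕ // StrictAnti v ∧ ∀ i, v i ≤ b} = (b + 1).choose t := by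
  let e : {v : Fin t → ℕ // StrictAnti v ∧ ∀ i, v i ≤ b} ≃
      (Fin t ↪o (Fin (b + 1))ᵒᵈ) :=
    { toFun v := OrderEmbedding.ofStrictMono
        (fun i => OrderDual.toDual ⟨v.1 i, Nat.lt_succ_of_le (v.2.2 i)⟩) fun _ _ h => v.2.1 h
      invFun f := ⟨fun i => ((OrderDual.ofDual (f i) : Fin (b + 1)) : ℕ),
        fun _ _ h => f.strictMono h, fun i => Nat.lt_succ_iff.1 (OrderDual.ofDual (f i)).2⟩
      left_inv _ := rfl
      right_inv _ := rfl }
  rw [Nat.card_congr (e.trans Set.powersetCard.ofFinEmbEquiv), Set.powersetCard.card]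
  simp

section Counting

variable {n : ℕ} (p : Fin n → ℕ)

def boundedTuples {j : ℕ} (hj : j ≤ n) : Finset (Fin j → ℕ) :=
  Fintype.piFinset fun i => Iic (p (Fin.castLE hj i))

variable {p}

lemma mem_boundedTuples {j : ℕ} (hj : j ≤ n) {u : Fin j → ℕ} :
    u ∈ boundedTuples p hj ↔ ∀ i : Fin j, ∀ h : (i : ℕ) < n, u i ≤ p ⟨i, h⟩ := by
  simp only [boundedTuples, Fintype.mem_piFinset, mem_Iic]
  exact ⟨fun h i _ => h i, fun h i => h i _⟩

lemma prefLP_zero : prefLP n p 0 = 1 := by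
  rw [prefLP, Nat.card_eq_one_iff_unique]
  exact ⟨⟨fun _ _ => Subtype.ext (funext fun i => i.elim0)⟩,
    ⟨⟨Fin.elim0, fun a => a.elim0, fun i => i.elim0⟩⟩⟩

open Classical in
lemma card_filter_riseFall_self {j : ℕ} (hj : j ≤ n) :
    #((boundedTuples p hj).filter (RiseFall j)) = prefLP n p j := by
  rw [← Nat.card_eq_finsetCard, prefLP]
  exact Nat.card_congr (Equiv.subtypeEquivRight fun u => by
    rw [mem_filter, mem_boundedTuples, riseFall_self_iff, and_comm])

lemma forall_le_iff_of_strictAnti (hp : Monotone p) {s t : ℕ} (hst : s + t ≤ n) (ht : 0 < t)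
    {u : Fin (s + t) → ℕ} (hu : StrictAnti fun i => u (Fin.natAdd s i)) :
    (∀ i : Fin (s + t), ∀ h : (i : ℕ) < n, u i ≤ p ⟨i, h⟩) ↔
      (∀ i : Fin s, ∀ h : (i : ℕ) < n, u (Fin.castAdd t i) ≤ p ⟨i, h⟩) ∧
        ∀ i, u (Fin.natAdd s i) ≤ p ⟨s, by omega⟩ := by
  refine ⟨fun h => ⟨fun i hi => by simpa using h (Fin.castAdd t i) (by simpa using hi),
    fun i => (hu.antitone (show (⟨0, ht⟩ : Fin t) ≤ i from Nat.zero_le _)).trans ?_⟩,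
    fun ⟨hq, hv⟩ => Fin.addCases ?_ ?_⟩
  · simpa using h (Fin.natAdd s ⟨0, ht⟩) (by simp; omega)
  · intro i hi
    simpa using hq i (by simpa using hi)
  · intro i _
    exact (hv i).trans (hp (Fin.mk_le_mk.2 (by simp)))

open Classical in
lemma card_filter_riseFall_of_lt (hp : Monotone p) {s t : ℕ} (hst : s + t ≤ n) (ht : 0 < t) :
    #((boundedTuples p hst).filter (RiseFall s)) =
      (p ⟨s, by omega⟩ + 1).choose t * prefLP n p s := by
  rw [← Nat.card_eq_finsetCard, prefLP, ← natCard_strictAnti_le_eq_choose, mul_comm,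
    ← Nat.card_prod]
  refine Nat.card_congr (((Fin.appendEquiv s t).symm.subtypeEquiv fun u => ?_).trans
    Equiv.subtypeProdEquivProd)
  rw [mem_filter, mem_boundedTuples, riseFall_iff_castAdd_natAdd, Fin.appendEquiv_symm_apply]
  constructor
  · rintro ⟨hbound, hq, hv⟩
    obtain ⟨hqb, hvb⟩ := (forall_le_iff_of_strictAnti hp hst ht hv).1 hbound
    exact ⟨⟨hq, hqb⟩, hv, hvb⟩
  · rintro ⟨⟨hq, hqb⟩, hv, hvb⟩
    exact ⟨(forall_le_iff_of_strictAnti hp hst ht hv).2 ⟨hqb, hvb⟩, hq, hv⟩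

open Classical in
lemma card_filter_riseFall (hp : Monotone p) {j s : ℕ} (hj : j ≤ n) (hs : s ≤ j) :
    #((boundedTuples p hj).filter (RiseFall s)) =
      ((if h : s < n then p ⟨s, h⟩ else 0) + 1).choose (j - s) * prefLP n p s := by
  obtain ⟨t, rfl⟩ := Nat.exists_eq_add_of_le hs
  rcases t.eq_zero_or_pos with rfl | ht
  · simpa using card_filter_riseFall_self hj
  · rw [dif_pos (by omega), Nat.add_sub_cancel_left, card_filter_riseFall_of_lt hp hj ht]

end Counting

/-- The triangular system: for `0 ≤ j ≤ n`,
`∑_{i=1}^{j+1} (-1)^{j-i+1} C(p_i + 1, j-i+1) LP((p_1,...,p_{i-1})) = [j = 0]`.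
(For `i = j + 1` the binomial is `C(p_{j+1}+1, 0) = 1`; when `j = n` this lone
out-of-range value is rendered by the `dite`, which does not affect the value
since `C(·, 0) = 1`.) -/
theorem stmt_19 (n : ℕ) (p : Fin n → ℕ) (hp : Monotone p) (j : ℕ) (hj : j ≤ n) :
    ∑ i ∈ Finset.Icc 1 (j + 1),
        (-1 : ℤ) ^ (j + 1 - i) *
          ((if h : i - 1 < n then p ⟨i - 1, h⟩ else 0) + 1).choose (j + 1 - i) *
          prefLP n p (i - 1)
      = if j = 0 then 1 else 0 := by
  rw [show Icc 1 (j + 1) = Ico (0 + 1) (j + 1 + 1) from rfl, ← sum_Ico_add', ← range_eq_Ico]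
  simp only [Nat.add_sub_add_right, Nat.add_sub_cancel]
  obtain rfl | hj0 := j.eq_zero_or_pos
  · simp [prefLP_zero]
  rw [if_neg hj0.ne', ← sum_range_neg_one_pow_mul_card_filter_riseFall (boundedTuples p hj) hj0]
  refine sum_congr rfl fun s hs => ?_
  rw [card_filter_riseFall hp hj (mem_range_succ_iff.1 hs)]
  push_cast
  ring
end
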